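/- Let E be a field and σ : E → E a ring automorphism with σ∘σ = id and σ ≠ id; let F = {x ∈ E : σ(x) = x} be its fixed field, and let N₁ = {x ∈ E^× : x σ(x) = 1}. Let n ≥ 1. Define an action of the group (F^×)ⁿ × N₁, with coordinates (a_1,…,a_n,a_{n+1}), on the set (F^×)^{n−1} × E^×, with coordinates (k_1,…,k_{n−1},k_n), by (a·k)_i = a_i a_{i+1}^{-1} k_i for 1 ≤ i ≤ n−1 and (a·k)_n = a_n a_{n+1}^{-1} k_n. Then two tuples k, k' lie in the same orbit if and only if k'_n k_n^{-1} ∈ F^×·N₁ := {f u : f ∈ F^×, u ∈ N₁}. In particular, the orbit space is in bijection with E^×/(F^×·N₁). -/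

import Mathlib

/-!
Going from `k` to `k'` amounts to choosing the torus coordinates by descending telescoping:
put `a_{n-1} = f` and `a_i = (k'_i / k_i) a_{i+1}` for `i < n - 1`. These stay in `F^×`
because the ratios `k'_i / k_i` with `i < n - 1` do, so the only constraint is on the last
coordinate, where `k'_{n-1} / k_{n-1} = a_{n-1} b⁻¹` with `a_{n-1} ∈ F^×` and `b⁻¹ ∈ N₁`.
-/

open Finset

/-- `F^×` as a submonoid of `E`. -/
def nonzeroFixedPoints {E : Type*} [Field E] (σ : E →+* E) : Submonoid E where
  carrier := {x | x ≠ 0 ∧ σ x = x}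
  one_mem' := ⟨one_ne_zero, map_one σ⟩
  mul_mem' hx hy := ⟨mul_ne_zero hx.1 hy.1, by rw [map_mul, hx.2, hy.2]⟩

theorem div_mem_nonzeroFixedPoints {E : Type*} [Field E] {σ : E →+* E} {x y : E}
    (hx : x ∈ nonzeroFixedPoints σ) (hy : y ∈ nonzeroFixedPoints σ) :
    x / y ∈ nonzeroFixedPoints σ :=
  ⟨div_ne_zero hx.1 hy.1, by rw [map_div₀, hx.2, hy.2]⟩

theorem inv_mul_map_inv_eq_one {G₀ F : Type*} [CommGroupWithZero G₀] [FunLike F G₀ G₀]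
    [MonoidWithZeroHomClass F G₀ G₀] (σ : F) {u : G₀} (hu : u * σ u = 1) :
    u⁻¹ * σ u⁻¹ = 1 := by
  rw [map_inv₀, ← mul_inv, hu, inv_one]

theorem Submonoid.exists_eq_mul_succ {M : Type*} [CommMonoid M] (S : Submonoid M) {n : ℕ}
    (r : Fin n → M) (hr : ∀ i : Fin n, (i : ℕ) + 1 < n → r i ∈ S) {c : M} (hc : c ∈ S) :
    ∃ a : Fin n → M, (∀ i, a i ∈ S) ∧
      (∀ (i : Fin n) (h : (i : ℕ) + 1 < n), a i = r i * a ⟨i + 1, h⟩) ∧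
      ∀ i : Fin n, ¬ (i : ℕ) + 1 < n → a i = c := by
  let r' : ℕ → M := fun j => if h : j < n then r ⟨j, h⟩ else 1
  refine ⟨fun i => (∏ j ∈ Ico (i : ℕ) (n - 1), r' j) * c, fun i => ?_, fun i h => ?_,
    fun i h => ?_⟩
  · refine S.mul_mem (S.prod_mem fun j hj => ?_) hc
    have hj : j < n - 1 := (mem_Ico.1 hj).2
    simpa only [r', dif_pos (by omega : j < n)] using hr ⟨j, by omega⟩ (by simp only; omega)
  · dsimp only
    rw [prod_eq_prod_Ico_succ_bot (by omega), mul_assoc]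
    simp only [r', dif_pos i.isLt]
  · dsimp only
    rw [Ico_eq_empty (by omega), prod_empty, one_mul]

/-- The torus action on Whittaker data for the quasi-split even orthogonal group
`SO*_{2n+2}(F)` (`E/F` quadratic with involution `σ`, `N₁` the norm-one group):
coefficients satisfy `k_0, …, k_{n-2} ∈ F^×` (σ-fixed) and `k_{n-1} ∈ E^×`;
the torus has coordinates `a_0, …, a_{n-1} ∈ F^×` and `b ∈ N₁`, acting by
`(a·k)_i = a_i a_{i+1}⁻¹ k_i` for `i < n-1` and `(a·k)_{n-1} = a_{n-1} b⁻¹ k_{n-1}`.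
Two tuples lie in the same orbit iff the ratio of their last coordinates lies in
`F^×·N₁`; so orbits are parameterized by `E^×/(F^×·N₁)`. -/
theorem stmt_13 (E : Type*) [Field E] (σ : E →+* E)
    (n : ℕ) (hn : 0 < n)
    (k k' : Fin n → E)
    (hk0 : ∀ i, k i ≠ 0) (hk'0 : ∀ i, k' i ≠ 0)
    (hkF : ∀ i : Fin n, (i : ℕ) + 1 < n → σ (k i) = k i)
    (hk'F : ∀ i : Fin n, (i : ℕ) + 1 < n → σ (k' i) = k' i) :
    (∃ (a : Fin n → E) (b : E), (∀ i, a i ≠ 0 ∧ σ (a i) = a i) ∧ b * σ b = 1 ∧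
      (∀ i : Fin n, k' i =
        if h : (i : ℕ) + 1 < n then a i * (a ⟨(i : ℕ) + 1, h⟩)⁻¹ * k i
        else a i * b⁻¹ * k i)) ↔
    (∃ f u : E, f ≠ 0 ∧ σ f = f ∧ u * σ u = 1 ∧
      k' ⟨n - 1, by omega⟩ * (k ⟨n - 1, by omega⟩)⁻¹ = f * u) := by
  have hlast : ¬ n - 1 + 1 < n := by omega
  constructor
  · rintro ⟨a, b, ha, hb, hk⟩
    refine ⟨a ⟨n - 1, by omega⟩, b⁻¹, (ha _).1, (ha _).2, inv_mul_map_inv_eq_one σ hb, ?_⟩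
    rw [mul_inv_eq_iff_eq_mul₀ (hk0 _), hk, dif_neg hlast]
  · rintro ⟨f, u, hf0, hfσ, hu, hratio⟩
    obtain ⟨a, ha, hstep, ha_last⟩ := (nonzeroFixedPoints σ).exists_eq_mul_succ
      (fun i => k' i / k i)
      (fun i hi => div_mem_nonzeroFixedPoints ⟨hk'0 i, hk'F i hi⟩ ⟨hk0 i, hkF i hi⟩)
      (c := f) ⟨hf0, hfσ⟩
    refine ⟨a, u⁻¹, ha, inv_mul_map_inv_eq_one σ hu, fun i => ?_⟩
    split_ifs with hi
    · rw [hstep i hi, mul_inv_cancel_right₀ (ha _).1, div_mul_cancel₀ _ (hk0 i)]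
    · rw [show i = ⟨n - 1, by omega⟩ from Fin.ext (by simp only; omega)]
      rw [ha_last _ hlast, inv_inv, ← hratio, inv_mul_cancel_right₀ (hk0 _)]
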